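/- Let n ≥ 2 and 1 ≤ k ≤ n−1, and consider the block upper triangular system ẋ(t) = B(t)x(t) with B(t) = [[B₁₁(t), B₁₂(t)], [0, B₂₂(t)]], where B₁₁, B₁₂, B₂₂ are continuous and uniformly bounded. Assume ẋ₁ = B₁₁(t)x₁ admits an exponential dichotomy with projection P₁ = 0 and ẋ₂ = B₂₂(t)x₂ admits an exponential dichotomy with projection P₂ = I_k. Then there exists a Lyapunov transformation S(t) such that the transformed system ż(t) = [S(t)⁻¹B(t)S(t) − S(t)⁻¹Ṡ(t)]z(t) is block diagonal of the form ż = diag(D₁(t), D₂(t))z with D₂(t) of size k×k, and moreover the upper-left block is unchanged: D₁(t) = B₁₁(t) for all t. -/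

import Mathlib

noncomputable section

open Matrix Set

/-- Euclidean (spectral / 2-norm) operator norm of a real matrix. -/
noncomputable def mnorm {m n : Type*} [Fintype m] [Fintype n] [DecidableEq n]
    (M : Matrix m n ℝ) : ℝ :=
  ‖LinearMap.toContinuousLinearMap (Matrix.toEuclideanLin M)‖

/-- Euclidean 2-norm of a vector. -/
noncomputable def vnorm {n : Type*} [Fintype n] (v : n → ℝ) : ℝ :=
  Real.sqrt (∑ i, (v i) ^ 2)

/-- A matrix-valued function is uniformly bounded on `J = [0, ∞)`. -/
def UnifBdd {m n : Type*} [Fintype m] [Fintype n] [DecidableEq n]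
    (A : ℝ → Matrix m n ℝ) : Prop :=
  ∃ a : ℝ, ∀ t ∈ Ici (0 : ℝ), mnorm (A t) ≤ a

/-- A matrix-valued function is continuous on `J = [0, ∞)` (entrywise). -/
def ContinuousOnJ {m n : Type*} (A : ℝ → Matrix m n ℝ) : Prop :=
  ∀ i j, ContinuousOn (fun t => A t i j) (Ici (0 : ℝ))

/-- `X` is a fundamental matrix solution of `ẋ = A(t) x` on `J = [0, ∞)`. -/
def IsFundamentalSolution {n : Type*} [Fintype n] [DecidableEq n]
    (A X : ℝ → Matrix n n ℝ) : Prop :=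
  (∀ t ∈ Ici (0 : ℝ), IsUnit (X t)) ∧
  ∀ t ∈ Ici (0 : ℝ), ∀ i j,
    HasDerivWithinAt (fun s => X s i j) ((A t * X t) i j) (Ici (0 : ℝ)) t

/-- `Φ` is the state transition matrix of `ẋ = A(t) x` on `J = [0, ∞)`:
`∂Φ(t,t₀)/∂t = A(t) Φ(t,t₀)`, `Φ(t₀,t₀) = I`. -/
def IsStateTransition {n : Type*} [Fintype n] [DecidableEq n]
    (A : ℝ → Matrix n n ℝ) (Φ : ℝ → ℝ → Matrix n n ℝ) : Prop :=
  (∀ t₀ ∈ Ici (0 : ℝ), Φ t₀ t₀ = 1) ∧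
  ∀ t₀ ∈ Ici (0 : ℝ), ∀ t ∈ Ici (0 : ℝ), ∀ i j,
    HasDerivWithinAt (fun s => Φ s t₀ i j) ((A t * Φ t t₀) i j) (Ici (0 : ℝ)) t

/-- The system `ẋ = F(t) x` is uniformly exponentially stable. -/
def SysUES {n : Type*} [Fintype n] [DecidableEq n] (F : ℝ → Matrix n n ℝ) : Prop :=
  ∃ K : ℝ, 1 ≤ K ∧ ∃ μ : ℝ, 0 < μ ∧
    ∀ Φ : ℝ → ℝ → Matrix n n ℝ, IsStateTransition F Φ →
      ∀ t₀ ∈ Ici (0 : ℝ), ∀ t, t₀ ≤ t →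
        mnorm (Φ t t₀) ≤ K * Real.exp (-μ * (t - t₀))

/-- The pair `(A(t), C(t))` is uniformly exponentially detectable. -/
def UnifDetectable {n p : Type*} [Fintype n] [DecidableEq n] [Fintype p] [DecidableEq p]
    (A : ℝ → Matrix n n ℝ) (C : ℝ → Matrix p n ℝ) : Prop :=
  ∃ L : ℝ → Matrix n p ℝ, ContinuousOnJ L ∧ UnifBdd L ∧
    SysUES (fun t => A t - L t * C t)

/-- Observability Gramian `M(t₁, t₀) = ∫_{t₀}^{t₁} Φ(s,t₀)ᵀ C(s)ᵀ C(s) Φ(s,t₀) ds`. -/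
noncomputable def gramian {n p : Type*} [Fintype n] [Fintype p]
    (C : ℝ → Matrix p n ℝ) (Φ : ℝ → ℝ → Matrix n n ℝ) (t₀ t₁ : ℝ) :
    Matrix n n ℝ :=
  Matrix.of fun i j => ∫ s in t₀..t₁, ((Φ s t₀)ᵀ * (C s)ᵀ * C s * Φ s t₀) i j

/-- The pair `(A(t), C(t))` is uniformly completely observable:
`β₁ I ⪯ M(t₀+σ, t₀) ⪯ β₂ I` for all `t₀ ∈ J`. -/
def UCO {n p : Type*} [Fintype n] [DecidableEq n] [Fintype p]
    (A : ℝ → Matrix n n ℝ) (C : ℝ → Matrix p n ℝ) : Prop :=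
  ∃ σ : ℝ, 0 < σ ∧ ∃ β₁ : ℝ, 0 < β₁ ∧ ∃ β₂ : ℝ, 0 < β₂ ∧
    ∀ Φ : ℝ → ℝ → Matrix n n ℝ, IsStateTransition A Φ →
      ∀ t₀ ∈ Ici (0 : ℝ),
        (gramian C Φ t₀ (t₀ + σ) - β₁ • (1 : Matrix n n ℝ)).PosSemidef ∧
        (β₂ • (1 : Matrix n n ℝ) - gramian C Φ t₀ (t₀ + σ)).PosSemidef

/-- Exponential dichotomy estimates for the fundamental solution `X` with
projection `P` and constants `K ≥ 1`, `α > 0`. -/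
def ExpDichotomyWith {n : Type*} [Fintype n] [DecidableEq n]
    (X : ℝ → Matrix n n ℝ) (P : Matrix n n ℝ) (K α : ℝ) : Prop :=
  P * P = P ∧ 1 ≤ K ∧ 0 < α ∧
  (∀ t₀ ∈ Ici (0 : ℝ), ∀ t, t₀ ≤ t →
    mnorm (X t * P * (X t₀)⁻¹) ≤ K * Real.exp (-α * (t - t₀))) ∧
  (∀ t ∈ Ici (0 : ℝ), ∀ t₀, t ≤ t₀ →
    mnorm (X t * (1 - P) * (X t₀)⁻¹) ≤ K * Real.exp (α * (t - t₀)))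

/-- The system `ẋ = A(t) x` admits an exponential dichotomy on `J` with projection `P`. -/
def HasExpDichotomy {n : Type*} [Fintype n] [DecidableEq n]
    (A : ℝ → Matrix n n ℝ) (P : Matrix n n ℝ) : Prop :=
  ∃ X : ℝ → Matrix n n ℝ, ∃ K α : ℝ,
    IsFundamentalSolution A X ∧ ExpDichotomyWith X P K α

/-- `(S, S')` is a Lyapunov transformation together with its derivative:
`S` is continuously differentiable with derivative `S'`, invertible for each `t`,
and `S`, `S⁻¹`, `S'` are uniformly bounded on `J`. -/
def IsLyapunovPair {n : Type*} [Fintype n] [DecidableEq n]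
    (S S' : ℝ → Matrix n n ℝ) : Prop :=
  (∀ t ∈ Ici (0 : ℝ), IsUnit (S t)) ∧
  (∀ t ∈ Ici (0 : ℝ), ∀ i j,
    HasDerivWithinAt (fun s => S s i j) (S' t i j) (Ici (0 : ℝ)) t) ∧
  ContinuousOnJ S' ∧
  UnifBdd S ∧ UnifBdd (fun t => (S t)⁻¹) ∧ UnifBdd S'

/-!
Since `ẋ₁ = B₁₁ x₁` is exponentially unstable (`P₁ = 0`) and `ẋ₂ = B₂₂ x₂` is exponentially
stable (`P₂ = I`), the kernel `X₁(t) X₁(s)⁻¹ B₁₂(s) X₂(s) X₂(t)⁻¹` decays like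
`e^{-(α₁ + α₂)(s - t)}` for `s ≥ t`. Hence
`H(t) = -∫_t^∞ X₁(t) X₁(s)⁻¹ B₁₂(s) X₂(s) X₂(t)⁻¹ ds` is bounded and solves the Sylvester equation
`Ḣ = B₁₁ H + B₁₂ - H B₂₂`, and this equation says exactly that the Lyapunov transformation
`S = [[I, H], [0, I]]` conjugates `B` to `diag(B₁₁, B₂₂)`.
-/

open scoped Matrix.Norms.L2Operator
open MeasureTheory

section MatrixNorm

variable {m n : Type*} [Fintype m] [Fintype n] [DecidableEq n]

lemma mnorm_eq_norm (M : Matrix m n ℝ) : mnorm M = ‖M‖ := rfl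

lemma Matrix.abs_apply_le_l2_opNorm (M : Matrix m n ℝ) (i : m) (j : n) : |M i j| ≤ ‖M‖ := by
  have h := M.l2_opNorm_mulVec (EuclideanSpace.single j 1)
  simp only [PiLp.norm_single, norm_one, mul_one] at h
  refine le_trans ?_ ((PiLp.norm_apply_le _ i).trans h)
  simp

variable (m n) in
def Matrix.l2OpEquivPi : Matrix m n ℝ ≃L[ℝ] (m → n → ℝ) :=
  (Matrix.ofLinearEquiv ℝ).symm.toContinuousLinearEquiv

lemma Matrix.exists_l2_opNorm_le_of_abs_apply_le :
    ∃ c, ∀ (M : Matrix m n ℝ) (b : ℝ), 0 ≤ b → (∀ i j, |M i j| ≤ b) → ‖M‖ ≤ c * b := by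
  let e := (Matrix.l2OpEquivPi m n).symm.toContinuousLinearMap
  refine ⟨‖e‖, fun M b hb hM => e.le_opNorm_of_le (x := M) ?_⟩
  exact pi_norm_le_iff_of_nonneg hb |>.2 fun i => pi_norm_le_iff_of_nonneg hb |>.2 fun j => hM i j

lemma hasDerivWithinAt_matrix_iff {F : ℝ → Matrix m n ℝ} {F' : Matrix m n ℝ} {s : Set ℝ} {t : ℝ} :
    HasDerivWithinAt F F' s t ↔ ∀ i j, HasDerivWithinAt (fun u => F u i j) (F' i j) s t := by
  let e := Matrix.l2OpEquivPi m n
  have key : HasDerivWithinAt F F' s t ↔ HasDerivWithinAt (fun u => e (F u)) (e F') s t :=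
    ⟨fun h => e.toContinuousLinearMap.hasFDerivAt.comp_hasDerivWithinAt t h,
      fun h => e.symm.toContinuousLinearMap.hasFDerivAt.comp_hasDerivWithinAt t h⟩
  rw [key, hasDerivWithinAt_pi]
  exact forall_congr' fun i => hasDerivWithinAt_pi

end MatrixNorm

lemma continuousOnJ_iff {m n : Type*} {A : ℝ → Matrix m n ℝ} :
    ContinuousOnJ A ↔ ContinuousOn A (Ici 0) :=
  ⟨fun h => continuousOn_pi.2 fun i => continuousOn_pi.2 (h i),
    fun h i j => continuousOn_pi.1 (continuousOn_pi.1 h i) j⟩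

lemma ContinuousOn.matrix_mul {X R l m n : Type*} [TopologicalSpace X] [TopologicalSpace R]
    [Fintype m] [Mul R] [AddCommMonoid R] [ContinuousAdd R] [ContinuousMul R]
    {A : X → Matrix l m R} {B : X → Matrix m n R} {s : Set X}
    (hA : ContinuousOn A s) (hB : ContinuousOn B s) : ContinuousOn (fun x => A x * B x) s :=
  (continuous_fst.matrix_mul continuous_snd).comp_continuousOn (hA.prodMk hB)

section MatrixCalculus

variable {l m n : Type*} [Fintype l] [Fintype m] [Fintype n] [DecidableEq m] [DecidableEq n]

variable (l m n) in
def Matrix.mulL2OpCLM : Matrix l m ℝ →L[ℝ] Matrix m n ℝ →L[ℝ] Matrix l n ℝ :=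
  (mulLinearMap ℝ).mkContinuous₂ 1 fun A B => by simpa using A.l2_opNorm_mul B

@[simp]
lemma Matrix.mulL2OpCLM_apply (A : Matrix l m ℝ) (B : Matrix m n ℝ) :
    Matrix.mulL2OpCLM l m n A B = A * B := rfl

lemma HasDerivWithinAt.matrix_mul {A : ℝ → Matrix l m ℝ} {B : ℝ → Matrix m n ℝ}
    {A' : Matrix l m ℝ} {B' : Matrix m n ℝ} {s : Set ℝ} {t : ℝ}
    (hA : HasDerivWithinAt A A' s t) (hB : HasDerivWithinAt B B' s t) :
    HasDerivWithinAt (fun u => A u * B u) (A' * B t + A t * B') s t := by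
  simpa [add_comm] using (Matrix.mulL2OpCLM l m n).hasDerivWithinAt_of_bilinear hA hB

lemma integral_matrix_mul_mul {p : Type*} [Fintype p] [DecidableEq p] {X : Type*}
    [MeasurableSpace X] {μ : Measure X} {f : X → Matrix m n ℝ} (hf : Integrable f μ)
    (A : Matrix l m ℝ) (C : Matrix n p ℝ) :
    ∫ x, A * f x * C ∂μ = A * (∫ x, f x ∂μ) * C :=
  (((Matrix.mulL2OpCLM l n p).flip C).comp (Matrix.mulL2OpCLM l m n A)).integral_comp_comm hf

end MatrixCalculus

lemma HasDerivWithinAt.matrix_inv {n : Type*} [Fintype n] [DecidableEq n]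
    {X : ℝ → Matrix n n ℝ} {X' : Matrix n n ℝ} {s : Set ℝ} {t : ℝ}
    (hX : HasDerivWithinAt X X' s t) (hX_unit : IsUnit (X t)) :
    HasDerivWithinAt (fun u => (X u)⁻¹) (-((X t)⁻¹ * X' * (X t)⁻¹)) s t := by
  obtain ⟨x, hx⟩ := hX_unit
  have h := (hx ▸ hasFDerivAt_ringInverse x).comp_hasDerivWithinAt t hX
  have h_inv : (X t)⁻¹ = ↑x⁻¹ := by rw [← hx, Matrix.coe_units_inv]
  rw [show (fun u => (X u)⁻¹) = Ring.inverse ∘ X from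
    funext fun u => Matrix.nonsing_inv_eq_ringInverse _, h_inv]
  exact h

lemma hasDerivWithinAt_setIntegral_Ioi {E : Type*} [NormedAddCommGroup E] [NormedSpace ℝ E]
    [CompleteSpace E] {f : ℝ → E} {a t : ℝ} (hfc : ContinuousOn f (Ici a))
    (hfi : IntegrableOn f (Ioi a)) (ht : t ∈ Ici a) :
    HasDerivWithinAt (fun u => ∫ s in Ioi u, f s) (-f t) (Ici a) t := by
  have hfi' : IntervalIntegrable f volume a t :=
    (intervalIntegrable_iff_integrableOn_Ioc_of_le ht).2 (hfi.mono_set Ioc_subset_Ioi_self)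
  have hF : HasDerivWithinAt (fun u => ∫ s in a..u, f s) (f t) (Ici a) t := by
    rcases (mem_Ici.1 ht).eq_or_lt with rfl | hat
    · exact intervalIntegral.integral_hasDerivWithinAt_right hfi'
        ((hfc.mono Ioi_subset_Ici_self).stronglyMeasurableAtFilter_nhdsWithin measurableSet_Ioi _)
        ((hfc _ ht).mono Ioi_subset_Ici_self)
    · exact (intervalIntegral.integral_hasDerivAt_right hfi'
        ((hfc.mono Ioi_subset_Ici_self).stronglyMeasurableAtFilter isOpen_Ioi t hat)
        (hfc.continuousAt (Ici_mem_nhds hat))).hasDerivWithinAt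
  refine (hF.const_sub (∫ s in Ioi a, f s)).congr_of_mem (fun u hu => ?_) ht
  rw [← intervalIntegral.integral_Ioi_sub_Ioi hfi hu, sub_sub_cancel]

lemma exp_neg_mul_sub_eq {β t s : ℝ} :
    Real.exp (-β * (s - t)) = Real.exp (β * t) * Real.exp (-β * s) := by
  rw [← Real.exp_add]; ring_nf

lemma integrableOn_exp_neg_mul_sub_Ioi {β : ℝ} (hβ : 0 < β) (t : ℝ) :
    IntegrableOn (fun s => Real.exp (-β * (s - t))) (Ioi t) := by
  simp_rw [exp_neg_mul_sub_eq]
  exact (exp_neg_integrableOn_Ioi t hβ).const_mul _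

lemma integral_exp_neg_mul_sub_Ioi {β : ℝ} (hβ : 0 < β) (t : ℝ) :
    ∫ s in Ioi t, Real.exp (-β * (s - t)) = β⁻¹ := by
  simp_rw [exp_neg_mul_sub_eq]
  rw [integral_const_mul, integral_exp_mul_Ioi (neg_neg_of_pos hβ), mul_div, mul_neg,
    ← Real.exp_add, neg_div_neg_eq]
  simp

section UnifBdd

variable {l m n : Type*} [Fintype l] [Fintype m] [Fintype n] [DecidableEq n]

lemma UnifBdd.exists_nonneg {A : ℝ → Matrix m n ℝ} (hA : UnifBdd A) :
    ∃ a, 0 ≤ a ∧ ∀ t ∈ Ici (0 : ℝ), ‖A t‖ ≤ a := by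
  obtain ⟨a, ha⟩ := hA
  exact ⟨a, (norm_nonneg _).trans (ha 0 self_mem_Ici), ha⟩

lemma unifBdd_const (M : Matrix m n ℝ) : UnifBdd fun _ => M :=
  ⟨‖M‖, fun _ _ => le_rfl⟩

lemma UnifBdd.neg {A : ℝ → Matrix m n ℝ} (hA : UnifBdd A) : UnifBdd fun t => -A t := by
  obtain ⟨a, ha⟩ := hA
  exact ⟨a, fun t ht => (norm_neg (A t)).trans_le (ha t ht)⟩

lemma UnifBdd.add {A B : ℝ → Matrix m n ℝ} (hA : UnifBdd A) (hB : UnifBdd B) :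
    UnifBdd fun t => A t + B t := by
  obtain ⟨a, ha⟩ := hA
  obtain ⟨b, hb⟩ := hB
  exact ⟨a + b, fun t ht => (norm_add_le (A t) (B t)).trans (add_le_add (ha t ht) (hb t ht))⟩

lemma UnifBdd.sub {A B : ℝ → Matrix m n ℝ} (hA : UnifBdd A) (hB : UnifBdd B) :
    UnifBdd fun t => A t - B t := by
  simpa only [sub_eq_add_neg] using hA.add hB.neg

lemma UnifBdd.mul [DecidableEq m] {A : ℝ → Matrix l m ℝ} {B : ℝ → Matrix m n ℝ} (hA : UnifBdd A)
    (hB : UnifBdd B) : UnifBdd fun t => A t * B t := by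
  obtain ⟨a, ha0, ha⟩ := hA.exists_nonneg
  obtain ⟨b, hb⟩ := hB
  exact ⟨a * b, fun t ht => (Matrix.l2_opNorm_mul _ _).trans
    (mul_le_mul (ha t ht) (hb t ht) (norm_nonneg _) ha0)⟩

lemma UnifBdd.fromBlocks {p : Type*} [Fintype p] [DecidableEq p]
    {A : ℝ → Matrix l n ℝ} {B : ℝ → Matrix l p ℝ} {C : ℝ → Matrix m n ℝ} {D : ℝ → Matrix m p ℝ}
    (hA : UnifBdd A) (hB : UnifBdd B) (hC : UnifBdd C) (hD : UnifBdd D) :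
    UnifBdd fun t => Matrix.fromBlocks (A t) (B t) (C t) (D t) := by
  obtain ⟨a, ha0, ha⟩ := hA.exists_nonneg
  obtain ⟨b, hb0, hb⟩ := hB.exists_nonneg
  obtain ⟨c, hc0, hc⟩ := hC.exists_nonneg
  obtain ⟨d, hd0, hd⟩ := hD.exists_nonneg
  obtain ⟨κ, hκ⟩ := Matrix.exists_l2_opNorm_le_of_abs_apply_le (m := l ⊕ m) (n := n ⊕ p)
  refine ⟨κ * (a + b + c + d), fun t ht => hκ (Matrix.fromBlocks (A t) (B t) (C t) (D t)) _
    (by positivity) ?_⟩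
  rintro (i | i) (j | j) <;> simp only [Matrix.fromBlocks_apply₁₁, Matrix.fromBlocks_apply₁₂,
    Matrix.fromBlocks_apply₂₁, Matrix.fromBlocks_apply₂₂]
  · linarith [(A t).abs_apply_le_l2_opNorm i j, ha t ht]
  · linarith [(B t).abs_apply_le_l2_opNorm i j, hb t ht]
  · linarith [(C t).abs_apply_le_l2_opNorm i j, hc t ht]
  · linarith [(D t).abs_apply_le_l2_opNorm i j, hd t ht]

end UnifBdd

section FundamentalSolution

variable {n : Type*} [Fintype n] [DecidableEq n] {A X : ℝ → Matrix n n ℝ} {t : ℝ}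

lemma IsFundamentalSolution.hasDerivWithinAt (hX : IsFundamentalSolution A X)
    (ht : t ∈ Ici 0) : HasDerivWithinAt X (A t * X t) (Ici 0) t :=
  hasDerivWithinAt_matrix_iff.2 (hX.2 t ht)

lemma IsFundamentalSolution.hasDerivWithinAt_inv (hX : IsFundamentalSolution A X)
    (ht : t ∈ Ici 0) : HasDerivWithinAt (fun s => (X s)⁻¹) (-((X t)⁻¹ * A t)) (Ici 0) t := by
  have h := (hX.hasDerivWithinAt ht).matrix_inv (hX.1 t ht)
  rwa [Matrix.mul_assoc, Matrix.mul_nonsing_inv_cancel_right _ _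
    ((Matrix.isUnit_iff_isUnit_det _).1 (hX.1 t ht))] at h

lemma IsFundamentalSolution.continuousOn (hX : IsFundamentalSolution A X) :
    ContinuousOn X (Ici 0) :=
  fun _ ht => (hX.hasDerivWithinAt ht).continuousWithinAt

lemma IsFundamentalSolution.continuousOn_inv (hX : IsFundamentalSolution A X) :
    ContinuousOn (fun s => (X s)⁻¹) (Ici 0) :=
  fun _ ht => (hX.hasDerivWithinAt_inv ht).continuousWithinAt

end FundamentalSolution

section Dichotomy

variable {n : Type*} [Fintype n] [DecidableEq n] {X : ℝ → Matrix n n ℝ} {K α t s : ℝ}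

lemma ExpDichotomyWith.norm_mul_inv_le_of_proj_zero (hX : ExpDichotomyWith X 0 K α)
    (ht : t ∈ Ici 0) (hts : t ≤ s) : ‖X t * (X s)⁻¹‖ ≤ K * Real.exp (-α * (s - t)) := by
  simpa [mnorm_eq_norm, neg_mul_eq_mul_neg, neg_sub] using hX.2.2.2.2 t ht s hts

lemma ExpDichotomyWith.norm_mul_inv_le_of_proj_one (hX : ExpDichotomyWith X 1 K α)
    (ht : t ∈ Ici 0) (hts : t ≤ s) : ‖X s * (X t)⁻¹‖ ≤ K * Real.exp (-α * (s - t)) := by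
  simpa [mnorm_eq_norm] using hX.2.2.2.1 t ht s hts

end Dichotomy

section Sylvester

variable {m k : Type*} [Fintype m] [Fintype k] [DecidableEq m] [DecidableEq k]
  {A X : ℝ → Matrix m m ℝ} {B Y : ℝ → Matrix k k ℝ} {C : ℝ → Matrix m k ℝ}

def sylvesterIntegral (X : ℝ → Matrix m m ℝ) (Y : ℝ → Matrix k k ℝ) (C : ℝ → Matrix m k ℝ)
    (t : ℝ) : Matrix m k ℝ :=
  -(X t * (∫ s in Ioi t, (X s)⁻¹ * C s * Y s) * (Y t)⁻¹)

lemma hasDerivWithinAt_sylvesterIntegral (hX : IsFundamentalSolution A X)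
    (hY : IsFundamentalSolution B Y)
    (hfc : ContinuousOn (fun s => (X s)⁻¹ * C s * Y s) (Ici 0))
    (hfi : IntegrableOn (fun s => (X s)⁻¹ * C s * Y s) (Ioi 0)) {t : ℝ} (ht : t ∈ Ici 0) :
    HasDerivWithinAt (sylvesterIntegral X Y C)
      (A t * sylvesterIntegral X Y C t + C t - sylvesterIntegral X Y C t * B t) (Ici 0) t := by
  have h := (((hX.hasDerivWithinAt ht).matrix_mul
    (hasDerivWithinAt_setIntegral_Ioi hfc hfi ht)).matrix_mul (hY.hasDerivWithinAt_inv ht)).neg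
  refine h.congr_deriv ?_
  have hXX : ∀ M : Matrix m k ℝ, X t * ((X t)⁻¹ * M) = M := fun M =>
    Matrix.mul_nonsing_inv_cancel_left _ _ ((Matrix.isUnit_iff_isUnit_det _).1 (hX.1 t ht))
  have hYY : Y t * (Y t)⁻¹ = 1 :=
    Matrix.mul_nonsing_inv _ ((Matrix.isUnit_iff_isUnit_det _).1 (hY.1 t ht))
  simp only [sylvesterIntegral, Matrix.mul_neg, Matrix.neg_mul, Matrix.add_mul,
    Matrix.mul_assoc, hXX, hYY, Matrix.mul_one]
  abel

lemma norm_sylvesterIntegral_le {t D β : ℝ} (hβ : 0 < β)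
    (hfi : IntegrableOn (fun s => (X s)⁻¹ * C s * Y s) (Ioi t))
    (hbound : ∀ s ∈ Ioi t, ‖X t * ((X s)⁻¹ * C s * Y s) * (Y t)⁻¹‖ ≤
      D * Real.exp (-β * (s - t))) :
    ‖sylvesterIntegral X Y C t‖ ≤ D / β := by
  rw [sylvesterIntegral, norm_neg, ← integral_matrix_mul_mul hfi]
  calc ‖∫ s in Ioi t, X t * ((X s)⁻¹ * C s * Y s) * (Y t)⁻¹‖
      ≤ ∫ s in Ioi t, D * Real.exp (-β * (s - t)) :=
        norm_integral_le_of_norm_le ((integrableOn_exp_neg_mul_sub_Ioi hβ t).const_mul D)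
          (ae_restrict_of_forall_mem measurableSet_Ioi hbound)
    _ = D / β := by rw [integral_const_mul, integral_exp_neg_mul_sub_Ioi hβ, div_eq_mul_inv]

lemma norm_dichotomy_kernel_le {K₁ K₂ α₁ α₂ c t s : ℝ} (hX : ExpDichotomyWith X 0 K₁ α₁)
    (hY : ExpDichotomyWith Y 1 K₂ α₂) (hC : ∀ u ∈ Ici (0 : ℝ), ‖C u‖ ≤ c)
    (ht : t ∈ Ici 0) (hts : t ≤ s) :
    ‖X t * ((X s)⁻¹ * C s * Y s) * (Y t)⁻¹‖ ≤
      K₁ * c * K₂ * Real.exp (-(α₁ + α₂) * (s - t)) := by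
  have hK₁ : 0 ≤ K₁ := zero_le_one.trans hX.2.1
  have hc : 0 ≤ c := (norm_nonneg _).trans (hC t ht)
  have hs : s ∈ Ici (0 : ℝ) := mem_Ici.2 ((mem_Ici.1 ht).trans hts)
  calc ‖X t * ((X s)⁻¹ * C s * Y s) * (Y t)⁻¹‖
      = ‖X t * (X s)⁻¹ * C s * (Y s * (Y t)⁻¹)‖ := by simp only [Matrix.mul_assoc]
    _ ≤ ‖X t * (X s)⁻¹‖ * ‖C s‖ * ‖Y s * (Y t)⁻¹‖ :=
        (Matrix.l2_opNorm_mul _ _).trans (mul_le_mul_of_nonneg_right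
          (Matrix.l2_opNorm_mul _ _) (norm_nonneg _))
    _ ≤ (K₁ * Real.exp (-α₁ * (s - t))) * c * (K₂ * Real.exp (-α₂ * (s - t))) := by
        gcongr
        · exact hX.norm_mul_inv_le_of_proj_zero ht hts
        · exact hC s hs
        · exact hY.norm_mul_inv_le_of_proj_one ht hts
    _ = K₁ * c * K₂ * Real.exp (-(α₁ + α₂) * (s - t)) := by
        rw [show -(α₁ + α₂) * (s - t) = -α₁ * (s - t) + -α₂ * (s - t) by ring, Real.exp_add]
        ring

lemma integrableOn_Ioi_of_norm_conj_le {f : ℝ → Matrix m k ℝ} {P : Matrix m m ℝ}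
    {Q : Matrix k k ℝ} (hP : IsUnit P) (hQ : IsUnit Q) {a D β : ℝ} (hβ : 0 < β)
    (hfc : ContinuousOn f (Ici a))
    (hbound : ∀ s ∈ Ioi a, ‖P * f s * Q⁻¹‖ ≤ D * Real.exp (-β * (s - a))) :
    IntegrableOn f (Ioi a) := by
  refine Integrable.mono' ((integrableOn_exp_neg_mul_sub_Ioi hβ a).const_mul (‖P⁻¹‖ * D * ‖Q‖))
    ((hfc.mono Ioi_subset_Ici_self).aestronglyMeasurable measurableSet_Ioi)
    (ae_restrict_of_forall_mem measurableSet_Ioi fun s hs => ?_)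
  have hPQ : P⁻¹ * (P * f s * Q⁻¹) * Q = f s := by
    rw [Matrix.mul_assoc P, Matrix.nonsing_inv_mul_cancel_left _ _
      ((Matrix.isUnit_iff_isUnit_det _).1 hP), Matrix.nonsing_inv_mul_cancel_right _ _
      ((Matrix.isUnit_iff_isUnit_det _).1 hQ)]
  calc ‖f s‖ = ‖P⁻¹ * (P * f s * Q⁻¹) * Q‖ := by rw [hPQ]
    _ ≤ ‖P⁻¹‖ * ‖P * f s * Q⁻¹‖ * ‖Q‖ :=
        (Matrix.l2_opNorm_mul _ _).trans (mul_le_mul_of_nonneg_right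
          (Matrix.l2_opNorm_mul _ _) (norm_nonneg _))
    _ ≤ ‖P⁻¹‖ * (D * Real.exp (-β * (s - a))) * ‖Q‖ := by gcongr; exact hbound s hs
    _ = ‖P⁻¹‖ * D * ‖Q‖ * Real.exp (-β * (s - a)) := by ring

end Sylvester

theorem exists_unifBdd_sylvester_solution {m k : Type*} [Fintype m] [Fintype k] [DecidableEq m]
    [DecidableEq k] {A : ℝ → Matrix m m ℝ} {B : ℝ → Matrix k k ℝ} {C : ℝ → Matrix m k ℝ}
    (hA : HasExpDichotomy A 0) (hB : HasExpDichotomy B 1) (hCc : ContinuousOn C (Ici 0))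
    (hCb : UnifBdd C) :
    ∃ H : ℝ → Matrix m k ℝ, UnifBdd H ∧
      ∀ t ∈ Ici (0 : ℝ), HasDerivWithinAt H (A t * H t + C t - H t * B t) (Ici 0) t := by
  obtain ⟨X, K₁, α₁, hX, hXd⟩ := hA
  obtain ⟨Y, K₂, α₂, hY, hYd⟩ := hB
  obtain ⟨c, hc⟩ := hCb
  have hβ : 0 < α₁ + α₂ := add_pos hXd.2.2.1 hYd.2.2.1
  have hkernel : ∀ t ∈ Ici (0 : ℝ), ∀ s, t ≤ s → ‖X t * ((X s)⁻¹ * C s * Y s) * (Y t)⁻¹‖ ≤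
      K₁ * c * K₂ * Real.exp (-(α₁ + α₂) * (s - t)) :=
    fun t ht s hts => norm_dichotomy_kernel_le hXd hYd hc ht hts
  have hfc : ContinuousOn (fun s => (X s)⁻¹ * C s * Y s) (Ici 0) :=
    (hX.continuousOn_inv.matrix_mul hCc).matrix_mul hY.continuousOn
  have hfi : IntegrableOn (fun s => (X s)⁻¹ * C s * Y s) (Ioi 0) :=
    integrableOn_Ioi_of_norm_conj_le (hX.1 0 self_mem_Ici) (hY.1 0 self_mem_Ici) hβ hfc
      fun s hs => hkernel 0 self_mem_Ici s (le_of_lt hs)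
  refine ⟨sylvesterIntegral X Y C, ⟨K₁ * c * K₂ / (α₁ + α₂), fun t ht => ?_⟩,
    fun t ht => hasDerivWithinAt_sylvesterIntegral hX hY hfc hfi ht⟩
  exact norm_sylvesterIntegral_le hβ (hfi.mono_set (Ioi_subset_Ioi ht))
    fun s hs => hkernel t ht s (le_of_lt hs)

section BlockShear

variable {m k : Type*} [Fintype m] [Fintype k] [DecidableEq m] [DecidableEq k]

def Matrix.blockShear {R : Type*} [Zero R] [One R] (H : Matrix m k R) :
    Matrix (m ⊕ k) (m ⊕ k) R :=
  Matrix.fromBlocks 1 H 0 1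

lemma Matrix.blockShear_mul_blockShear {R : Type*} [Ring R] (H H' : Matrix m k R) :
    blockShear H * blockShear H' = blockShear (H + H') := by
  simp [blockShear, Matrix.fromBlocks_multiply, add_comm]

lemma Matrix.inv_blockShear {R : Type*} [CommRing R] (H : Matrix m k R) :
    (blockShear H)⁻¹ = blockShear (-H) :=
  Matrix.inv_eq_right_inv (by
    rw [blockShear_mul_blockShear, add_neg_cancel, blockShear, Matrix.fromBlocks_one])

lemma Matrix.isUnit_blockShear {R : Type*} [CommRing R] (H : Matrix m k R) :
    IsUnit (blockShear H) := by
  simp [blockShear, Matrix.isUnit_iff_isUnit_det]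

lemma Matrix.blockShear_conj {R : Type*} [CommRing R] (A : Matrix m m R)
    (B H H' : Matrix m k R) (D : Matrix k k R) :
    (blockShear H)⁻¹ * fromBlocks A B 0 D * blockShear H - (blockShear H)⁻¹ * fromBlocks 0 H' 0 0 =
      fromBlocks A (A * H + B - H * D - H') 0 D := by
  rw [inv_blockShear]
  simp only [blockShear, Matrix.fromBlocks_multiply, sub_eq_add_neg, Matrix.fromBlocks_neg,
    Matrix.fromBlocks_add, Matrix.one_mul, Matrix.mul_one, Matrix.zero_mul, Matrix.mul_zero,
    Matrix.neg_mul, add_zero, zero_add, neg_zero]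
  congr 1
  abel

lemma isLyapunovPair_blockShear {H H' : ℝ → Matrix m k ℝ}
    (hH : ∀ t ∈ Ici (0 : ℝ), HasDerivWithinAt H (H' t) (Ici 0) t)
    (hH'c : ContinuousOn H' (Ici 0)) (hHb : UnifBdd H) (hH'b : UnifBdd H') :
    IsLyapunovPair (fun t => Matrix.blockShear (H t))
      (fun t => Matrix.fromBlocks 0 (H' t) 0 0) := by
  refine ⟨fun t _ => Matrix.isUnit_blockShear _, fun t ht => ?_, ?_, ?_, ?_, ?_⟩
  · rintro (i | i) (j | j)
    · exact hasDerivWithinAt_const _ _ _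
    · exact hasDerivWithinAt_matrix_iff.1 (hH t ht) i j
    · exact hasDerivWithinAt_const _ _ _
    · exact hasDerivWithinAt_const _ _ _
  · exact continuousOnJ_iff.2 <| (continuous_const.matrix_fromBlocks continuous_id
      continuous_const continuous_const).comp_continuousOn hH'c
  · exact (unifBdd_const 1).fromBlocks hHb (unifBdd_const 0) (unifBdd_const 1)
  · simp_rw [Matrix.inv_blockShear]
    exact (unifBdd_const 1).fromBlocks hHb.neg (unifBdd_const 0) (unifBdd_const 1)
  · exact (unifBdd_const 0).fromBlocks hH'b (unifBdd_const 0) (unifBdd_const 0)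

end BlockShear

theorem block_triangular_reducible_D1_eq_B11_general
    (n k : ℕ)
    (B11 : ℝ → Matrix (Fin (n - k)) (Fin (n - k)) ℝ)
    (B12 : ℝ → Matrix (Fin (n - k)) (Fin k) ℝ)
    (B22 : ℝ → Matrix (Fin k) (Fin k) ℝ)
    (hB11 : ContinuousOnJ B11 ∧ UnifBdd B11)
    (hB12 : ContinuousOnJ B12 ∧ UnifBdd B12)
    (hB22 : ContinuousOnJ B22 ∧ UnifBdd B22)
    (hED1 : HasExpDichotomy B11 (0 : Matrix (Fin (n - k)) (Fin (n - k)) ℝ))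
    (hED2 : HasExpDichotomy B22 (1 : Matrix (Fin k) (Fin k) ℝ))
    (B : ℝ → Matrix (Fin (n - k) ⊕ Fin k) (Fin (n - k) ⊕ Fin k) ℝ)
    (hB : ∀ t, B t = Matrix.fromBlocks (B11 t) (B12 t) 0 (B22 t)) :
    ∃ S S' : ℝ → Matrix (Fin (n - k) ⊕ Fin k) (Fin (n - k) ⊕ Fin k) ℝ,
      IsLyapunovPair S S' ∧
      ∃ D2 : ℝ → Matrix (Fin k) (Fin k) ℝ,
        ∀ t ∈ Ici (0 : ℝ),
          (S t)⁻¹ * B t * S t - (S t)⁻¹ * S' t =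
            Matrix.fromBlocks (B11 t) 0 0 (D2 t) := by
  obtain ⟨H, hHb, hH⟩ :=
    exists_unifBdd_sylvester_solution hED1 hED2 (continuousOnJ_iff.1 hB12.1) hB12.2
  have hHc : ContinuousOn H (Ici 0) := fun t ht => (hH t ht).continuousWithinAt
  have hH'c : ContinuousOn (fun t => B11 t * H t + B12 t - H t * B22 t) (Ici 0) :=
    (((continuousOnJ_iff.1 hB11.1).matrix_mul hHc).add (continuousOnJ_iff.1 hB12.1)).sub
      (hHc.matrix_mul (continuousOnJ_iff.1 hB22.1))
  have hH'b : UnifBdd fun t => B11 t * H t + B12 t - H t * B22 t :=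
    ((hB11.2.mul hHb).add hB12.2).sub (hHb.mul hB22.2)
  refine ⟨_, _, isLyapunovPair_blockShear hH hH'c hHb hH'b, B22, fun t _ => ?_⟩
  rw [hB, Matrix.blockShear_conj, sub_self]

/-- Reducibility of a block triangular system with exponential dichotomy to block
diagonal form with unchanged upper-left block (Proposition 3, second part). -/
theorem block_triangular_reducible_D1_eq_B11
    (n k : ℕ) (hn : 2 ≤ n) (hk1 : 1 ≤ k) (hk2 : k ≤ n - 1)
    (B11 : ℝ → Matrix (Fin (n - k)) (Fin (n - k)) ℝ)
    (B12 : ℝ → Matrix (Fin (n - k)) (Fin k) ℝ)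
    (B22 : ℝ → Matrix (Fin k) (Fin k) ℝ)
    (hB11 : ContinuousOnJ B11 ∧ UnifBdd B11)
    (hB12 : ContinuousOnJ B12 ∧ UnifBdd B12)
    (hB22 : ContinuousOnJ B22 ∧ UnifBdd B22)
    (hED1 : HasExpDichotomy B11 (0 : Matrix (Fin (n - k)) (Fin (n - k)) ℝ))
    (hED2 : HasExpDichotomy B22 (1 : Matrix (Fin k) (Fin k) ℝ))
    (B : ℝ → Matrix (Fin (n - k) ⊕ Fin k) (Fin (n - k) ⊕ Fin k) ℝ)
    (hB : ∀ t, B t = Matrix.fromBlocks (B11 t) (B12 t) 0 (B22 t)) :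
    ∃ S S' : ℝ → Matrix (Fin (n - k) ⊕ Fin k) (Fin (n - k) ⊕ Fin k) ℝ,
      IsLyapunovPair S S' ∧
      ∃ D2 : ℝ → Matrix (Fin k) (Fin k) ℝ,
        ∀ t ∈ Ici (0 : ℝ),
          (S t)⁻¹ * B t * S t - (S t)⁻¹ * S' t =
            Matrix.fromBlocks (B11 t) 0 0 (D2 t) :=
  block_triangular_reducible_D1_eq_B11_general n k B11 B12 B22 hB11 hB12 hB22 hED1 hED2 B hB

end
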